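/- arXiv:1404.6036 — 2 statements merged into one kernel-verified Lean document; each statement's English description precedes it below -/
import Mathlib

section
/- Any formula containing no occurrence of ¬ reduces, via the five ⋗-rewrite rules, into some formula in unit chain expansion. -/
/-- Atomic symbols: literals from `A` together with ⊤ and ⊥. -/
inductive Atom (A : Type) : Type where
  | lit : A → Atom A
  | top : Atom A
  | bot : Atom A

/-- Complement on atoms, induced by a complement map `c` on literals. -/
def Atom.compl {A : Type} (c : A → A) : Atom A → Atom A
  | .lit a => .lit (c a)
  | .top => .bot
  | .bot => .top

/-- Formulas of gradual classical logic. `grad` is the connective ⋗. -/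
inductive Fm (A : Type) : Type where
  | atom : Atom A → Fm A
  | and : Fm A → Fm A → Fm A
  | or : Fm A → Fm A → Fm A
  | neg : Fm A → Fm A
  | grad : Fm A → Fm A → Fm A

/-- One-step rewriting using only the five ⋗-rules (with congruence closure). -/
inductive GStep {A : Type} : Fm A → Fm A → Prop where
  | gradAssoc (F G H) : GStep (.grad (.grad F G) H)
      (.and (.grad F H) (.or (.grad F G) (.grad F (.grad G H))))
  | gradAndL (F G H) : GStep (.grad (.and F G) H) (.and (.grad F H) (.grad G H))
  | gradOrL (F G H) : GStep (.grad (.or F G) H) (.or (.grad F H) (.grad G H))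
  | gradAndR (F G H) : GStep (.grad F (.and G H)) (.and (.grad F G) (.grad F H))
  | gradOrR (F G H) : GStep (.grad F (.or G H)) (.or (.grad F G) (.grad F H))
  | andL {F F'} (G) : GStep F F' → GStep (.and F G) (.and F' G)
  | andR (F) {G G'} : GStep G G' → GStep (.and F G) (.and F G')
  | orL {F F'} (G) : GStep F F' → GStep (.or F G) (.or F' G)
  | orR (F) {G G'} : GStep G G' → GStep (.or F G) (.or F G')
  | negC {F F'} : GStep F F' → GStep (.neg F) (.neg F')
  | gradL {F F'} (G) : GStep F F' → GStep (.grad F G) (.grad F' G)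
  | gradR (F) {G G'} : GStep G G' → GStep (.grad F G) (.grad F G')

/-- One-step rewriting with both the ¬-rules and the ⋗-rules (congruence closure). -/
inductive Step {A : Type} (c : A → A) : Fm A → Fm A → Prop where
  | negAtom (s) : Step c (.neg (.atom s)) (.atom (s.compl c))
  | negAnd (F G) : Step c (.neg (.and F G)) (.or (.neg F) (.neg G))
  | negOr (F G) : Step c (.neg (.or F G)) (.and (.neg F) (.neg G))
  | negGrad (s F) : Step c (.neg (.grad (.atom s) F))
      (.or (.atom (s.compl c)) (.grad (.atom s) (.neg F)))
  | gradAssoc (F G H) : Step c (.grad (.grad F G) H)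
      (.and (.grad F H) (.or (.grad F G) (.grad F (.grad G H))))
  | gradAndL (F G H) : Step c (.grad (.and F G) H) (.and (.grad F H) (.grad G H))
  | gradOrL (F G H) : Step c (.grad (.or F G) H) (.or (.grad F H) (.grad G H))
  | gradAndR (F G H) : Step c (.grad F (.and G H)) (.and (.grad F G) (.grad F H))
  | gradOrR (F G H) : Step c (.grad F (.or G H)) (.or (.grad F G) (.grad F H))
  | andL {F F'} (G) : Step c F F' → Step c (.and F G) (.and F' G)
  | andR (F) {G G'} : Step c G G' → Step c (.and F G) (.and F G')
  | orL {F F'} (G) : Step c F F' → Step c (.or F G) (.or F' G)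
  | orR (F) {G G'} : Step c G G' → Step c (.or F G) (.or F G')
  | negC {F F'} : Step c F F' → Step c (.neg F) (.neg F')
  | gradL {F F'} (G) : Step c F F' → Step c (.grad F G) (.grad F' G)
  | gradR (F) {G G'} : Step c G G' → Step c (.grad F G) (.grad F G')

/-- Reduction: reflexive-transitive closure of one-step rewriting (all rules). -/
def Red {A : Type} (c : A → A) : Fm A → Fm A → Prop :=
  Relation.ReflTransGen (Step c)

/-- Reduction using only the ⋗-rules. -/
def GRed {A : Type} : Fm A → Fm A → Prop :=
  Relation.ReflTransGen GStep

/-- Unit chains (possibly of length one, i.e. a single atom): s₀⋗s₁⋗⋯⋗s_k. -/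
inductive UnitTail {A : Type} : Fm A → Prop where
  | atom (s : Atom A) : UnitTail (.atom s)
  | grad (s : Atom A) {F : Fm A} : UnitTail F → UnitTail (.grad (.atom s) F)

/-- Formulas in unit chain expansion: built from atoms and unit chains via ∧ and ∨;
in particular no ¬ occurs and every ⋗ lies in a unit chain of atoms. -/
inductive UCE {A : Type} : Fm A → Prop where
  | atom (s : Atom A) : UCE (.atom s)
  | and {F G : Fm A} : UCE F → UCE G → UCE (.and F G)
  | or {F G : Fm A} : UCE F → UCE G → UCE (.or F G)
  | chain (s : Atom A) {F : Fm A} : UnitTail F → UCE (.grad (.atom s) F)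

/-- Negation-free formulas. -/
inductive NegFree {A : Type} : Fm A → Prop where
  | atom (s : Atom A) : NegFree (.atom s)
  | and {F G : Fm A} : NegFree F → NegFree G → NegFree (.and F G)
  | or {F G : Fm A} : NegFree F → NegFree G → NegFree (.or F G)
  | grad {F G : Fm A} : NegFree F → NegFree G → NegFree (.grad F G)

/-- A valuation frame: a local interpretation `I` on prefix-sequences and atoms,
subject to the conditions of gradual classical logic.  The global interpretation `J`
is determined by `I` (see `GFrame.valAux`). -/
structure GFrame (A : Type) (c : A → A) : Type where
  I : List (Atom A) → Atom A → Bool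
  I_top : ∀ ψ, I ψ .top = true
  I_bot : ∀ ψ, I ψ .bot = false
  I_compl : ∀ ψ (a : A), (I ψ (.lit a) = false ↔ I ψ (.lit (c a)) = true)
  I_sync : ∀ ψ ψ' s, ψ.length = ψ'.length → I ψ s = I ψ' s

/-- Valuation relative to a prefix ψ.  On a unit chain s₀⋗⋯⋗s_k (with prefix ε)
this computes the global interpretation J(s₀…s_k) = 1 iff every local step is 1;
∧ and ∨ are Boolean. -/
def GFrame.valAux {A : Type} {c : A → A} (M : GFrame A c) :
    List (Atom A) → Fm A → Bool
  | ψ, .atom s => M.I ψ s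
  | ψ, .and F G => M.valAux ψ F && M.valAux ψ G
  | ψ, .or F G => M.valAux ψ F || M.valAux ψ G
  | ψ, .neg F => !(M.valAux ψ F)
  | ψ, .grad (.atom s) G => M.I ψ s && M.valAux (ψ ++ [s]) G
  | _, .grad _ _ => false

/-- The valuation [M ⊨ F]. -/
def GFrame.val {A : Type} {c : A → A} (M : GFrame A c) (F : Fm A) : Bool :=
  M.valAux [] F

/-- Push `s ⋗ ·` through ∧ and ∨ (normalization step of `recursiveReduce`). -/
def gradDist {A : Type} (s : Atom A) : Fm A → Fm A
  | .and F G => .and (gradDist s F) (gradDist s G)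
  | .or F G => .or (gradDist s F) (gradDist s G)
  | F => .grad (.atom s) F

/-- `recursiveReduce`: swap ∧/∨, complement non-chain atoms, and replace a chain
with head s and tail T by s^c ∨ (s ⋗ recursiveReduce T), normalized into unit
chain expansion.  On a unit chain s₀⋗⋯⋗s_k it yields
s₀^c ∨ (s₀⋗s₁^c) ∨ ⋯ ∨ (s₀⋗⋯⋗s_{k−1}⋗s_k^c). -/
def recursiveReduce {A : Type} (c : A → A) : Fm A → Fm A
  | .atom s => .atom (s.compl c)
  | .and F G => .or (recursiveReduce c F) (recursiveReduce c G)
  | .or F G => .and (recursiveReduce c F) (recursiveReduce c G)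
  | .neg F => .neg (recursiveReduce c F)
  | .grad (.atom s) G => .or (.atom (s.compl c)) (gradDist s (recursiveReduce c G))
  | .grad F G => .grad (recursiveReduce c F) (recursiveReduce c G)

/-!
Rewrite the two arguments of each connective first; it then suffices to show that `F ⋗ G`
reduces to unit chain expansion when `F` and `G` already are in it. The ∧/∨-rules push `⋗`
down to unit chains on both sides, and a chain `s ⋗ T` on the left is unfolded by the
associativity rule into `(s ⋗ G) ∧ ((s ⋗ T) ∨ (s ⋗ (T ⋗ G)))`, where `T ⋗ G` is handled by
induction on the length of the chain.
-/

variable {A : Type}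

namespace GRed

theorem single {F G : Fm A} (h : GStep F G) : GRed F G :=
  Relation.ReflTransGen.single h

theorem and_congr {F F' G G' : Fm A} (hF : GRed F F') (hG : GRed G G') :
    GRed (.and F G) (.and F' G') :=
  (hF.lift (Fm.and · G) fun _ _ => GStep.andL G).trans
    (hG.lift (Fm.and F' ·) fun _ _ => GStep.andR F')

theorem or_congr {F F' G G' : Fm A} (hF : GRed F F') (hG : GRed G G') :
    GRed (.or F G) (.or F' G') :=
  (hF.lift (Fm.or · G) fun _ _ => GStep.orL G).trans
    (hG.lift (Fm.or F' ·) fun _ _ => GStep.orR F')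

theorem grad_congr {F F' G G' : Fm A} (hF : GRed F F') (hG : GRed G G') :
    GRed (.grad F G) (.grad F' G') :=
  (hF.lift (Fm.grad · G) fun _ _ => GStep.gradL G).trans
    (hG.lift (Fm.grad F' ·) fun _ _ => GStep.gradR F')

end GRed

def ReducesToUCE (F : Fm A) : Prop :=
  ∃ F', GRed F F' ∧ UCE F'

namespace ReducesToUCE

theorem of_uce {F : Fm A} (hF : UCE F) : ReducesToUCE F :=
  ⟨F, .refl, hF⟩

theorem of_gRed {F F' : Fm A} (h : GRed F F') : ReducesToUCE F' → ReducesToUCE F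
  | ⟨F'', h', hF''⟩ => ⟨F'', h.trans h', hF''⟩

theorem and {F G : Fm A} : ReducesToUCE F → ReducesToUCE G → ReducesToUCE (.and F G)
  | ⟨F', hF, uF⟩, ⟨G', hG, uG⟩ => ⟨.and F' G', hF.and_congr hG, uF.and uG⟩

theorem or {F G : Fm A} : ReducesToUCE F → ReducesToUCE G → ReducesToUCE (.or F G)
  | ⟨F', hF, uF⟩, ⟨G', hG, uG⟩ => ⟨.or F' G', hF.or_congr hG, uF.or uG⟩

theorem atom_grad (s : Atom A) {G : Fm A} (hG : UCE G) :
    ReducesToUCE (.grad (.atom s) G) := by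
  induction hG with
  | atom t => exact of_uce (.chain s (.atom t))
  | and _ _ ih₁ ih₂ => exact of_gRed (.single (.gradAndR _ _ _)) (ih₁.and ih₂)
  | or _ _ ih₁ ih₂ => exact of_gRed (.single (.gradOrR _ _ _)) (ih₁.or ih₂)
  | chain t hT => exact of_uce (.chain s (.grad t hT))

theorem atom_grad_of_reducesToUCE (s : Atom A) {G : Fm A} :
    ReducesToUCE G → ReducesToUCE (.grad (.atom s) G)
  | ⟨_, hG, uG⟩ => of_gRed (GRed.grad_congr .refl hG) (atom_grad s uG)

theorem unitTail_grad {T G : Fm A} (hT : UnitTail T) (hG : UCE G) :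
    ReducesToUCE (.grad T G) := by
  induction hT with
  | atom s => exact atom_grad s hG
  | grad s hT ih =>
    have hsG : ReducesToUCE (.grad (.atom s) G) := atom_grad s hG
    have hsT : ReducesToUCE (.grad (.atom s) _) := of_uce (.chain s hT)
    have hsTG := atom_grad_of_reducesToUCE s ih
    exact of_gRed (.single (.gradAssoc _ _ _)) (hsG.and (hsT.or hsTG))

theorem grad_of_uce {F G : Fm A} (hF : UCE F) (hG : UCE G) : ReducesToUCE (.grad F G) := by
  induction hF with
  | atom s => exact atom_grad s hG
  | and _ _ ih₁ ih₂ => exact of_gRed (.single (.gradAndL _ _ _)) (ih₁.and ih₂)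
  | or _ _ ih₁ ih₂ => exact of_gRed (.single (.gradOrL _ _ _)) (ih₁.or ih₂)
  | chain s hT => exact unitTail_grad (.grad s hT) hG

theorem grad {F G : Fm A} : ReducesToUCE F → ReducesToUCE G → ReducesToUCE (.grad F G)
  | ⟨_, hF, uF⟩, ⟨_, hG, uG⟩ => of_gRed (hF.grad_congr hG) (grad_of_uce uF uG)

end ReducesToUCE

/-- Any negation-free formula reduces, via the five ⋗-rewrite rules,
into some formula in unit chain expansion. -/
theorem stmt2 {A : Type} {F : Fm A} (h : NegFree F) :
    ∃ F' : Fm A, GRed F F' ∧ UCE F' := by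
  change ReducesToUCE F
  induction h with
  | atom s => exact .of_uce (.atom s)
  | and _ _ ih₁ ih₂ => exact ih₁.and ih₂
  | or _ _ ih₁ ih₂ => exact ih₁.or ih₂
  | grad _ _ ih₁ ih₂ => exact ih₁.grad ih₂
end

section
/- For any unit chain F = s₀⋗s₁⋗⋯⋗s_k and any valuation frame M, [M ⊨ F] = [M ⊨ recursiveReduce(recursiveReduce(F))] (double negation law on unit chains). -/
/-- Formulas where every ⋗ has an atomic left argument. -/
inductive Good {A : Type} : Fm A → Prop where
  | atom (s : Atom A) : Good (.atom s)
  | and {F G : Fm A} : Good F → Good G → Good (.and F G)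
  | or {F G : Fm A} : Good F → Good G → Good (.or F G)
  | neg {F : Fm A} : Good F → Good (.neg F)
  | grad (s : Atom A) {F : Fm A} : Good F → Good (.grad (.atom s) F)

theorem UnitTail.good {A : Type} {F : Fm A} (h : UnitTail F) : Good F := by
  induction h with
  | atom s => exact .atom s
  | grad s _ ih => exact .grad s ih

theorem gradDist_good {A : Type} {s : Atom A} {F : Fm A} (h : Good F) :
    Good (gradDist s F) := by
  induction h with
  | atom t => exact .grad s (.atom t)
  | and _ _ ih1 ih2 => exact .and ih1 ih2
  | or _ _ ih1 ih2 => exact .or ih1 ih2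
  | neg hF => exact .grad s (.neg hF)
  | grad t hF => exact .grad s (.grad t hF)

theorem recursiveReduce_good {A : Type} {c : A → A} {F : Fm A} (h : Good F) :
    Good (recursiveReduce c F) := by
  induction h with
  | atom s => exact .atom _
  | and _ _ ih1 ih2 => exact .or ih1 ih2
  | or _ _ ih1 ih2 => exact .and ih1 ih2
  | neg _ ih => exact .neg ih
  | grad s _ ih => exact .or (.atom _) (gradDist_good ih)

theorem valAux_gradDist {A : Type} {c : A → A} (M : GFrame A c) (s : Atom A) :
    ∀ (F : Fm A) (ψ : List (Atom A)),
      M.valAux ψ (gradDist s F) = (M.I ψ s && M.valAux (ψ ++ [s]) F) := by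
  intro F
  induction F with
  | and F G ihF ihG =>
      intro ψ
      simp only [gradDist, GFrame.valAux, ihF, ihG]
      cases M.I ψ s <;> simp
  | or F G ihF ihG =>
      intro ψ
      simp only [gradDist, GFrame.valAux, ihF, ihG]
      cases M.I ψ s <;> simp
  | atom t => intro ψ; rfl
  | neg F _ => intro ψ; rfl
  | grad F G _ _ => intro ψ; rfl

theorem I_compl_eq {A : Type} {c : A → A} (M : GFrame A c) (ψ : List (Atom A))
    (s : Atom A) : M.I ψ (s.compl c) = !(M.I ψ s) := by
  cases s with
  | top => simp [Atom.compl, M.I_top, M.I_bot]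
  | bot => simp [Atom.compl, M.I_top, M.I_bot]
  | lit a =>
      have h := M.I_compl ψ a
      cases hv : M.I ψ (.lit a) <;> simp_all [Atom.compl]

theorem valAux_rr_neg {A : Type} {c : A → A} (M : GFrame A c) {F : Fm A}
    (h : Good F) : ∀ ψ, M.valAux ψ (recursiveReduce c F) = !(M.valAux ψ F) := by
  induction h with
  | atom s => intro ψ; simpa [recursiveReduce, GFrame.valAux] using I_compl_eq M ψ s
  | and _ _ ih1 ih2 => intro ψ; simp [recursiveReduce, GFrame.valAux, ih1, ih2]
  | or _ _ ih1 ih2 => intro ψ; simp [recursiveReduce, GFrame.valAux, ih1, ih2]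
  | neg _ ih => intro ψ; simp [recursiveReduce, GFrame.valAux, ih]
  | grad s _ ih =>
      intro ψ
      simp only [recursiveReduce, GFrame.valAux, valAux_gradDist, ih,
        I_compl_eq]
      cases M.I ψ s <;> simp

/-- double negation law on unit chains. -/
theorem stmt6 {A : Type} {c : A → A} (hc : Function.Involutive c)
    (M : GFrame A c) {F : Fm A} (h : UnitTail F) :
    M.val F = M.val (recursiveReduce c (recursiveReduce c F)) := by
  have hg := h.good
  unfold GFrame.val
  rw [valAux_rr_neg M (recursiveReduce_good hg), valAux_rr_neg M hg, Bool.not_not]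
end
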